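/- Let s ≥ 0 be a fixed real number. Then uniformly for real z ≥ 1 and integers a ≥ 1, ∑_{n ≤ z, gcd(n,a)=1} n^s = z^{s+1} φ(a)/((s+1) a) + O(z^s θ(a)), where the implied constant depends only on s. -/

import Mathlib

/-!
Sieving out the common factors with `a` by Möbius inversion writes the sum as
`∑_{d ∣ a} μ(d) d^s ∑_{m ≤ z/d} m^s`. Comparing each inner sum with `∫₀^{z/d} t^s dt` costs at
most `(z/d)^s`, so the total error is at most `z^s ∑_{d ∣ a} |μ(d)| = z^s θ(a)`, while the main
terms add up to `z^{s+1}/(s+1) · ∑_{d ∣ a} μ(d)/d = z^{s+1} φ(a)/((s+1) a)`. The constant is `1`.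
-/

/-- `theta a` is the number of squarefree divisors of `a`. -/
def theta (a : ℕ) : ℕ := (a.divisors.filter Squarefree).card

open Finset ArithmeticFunction
open scoped ArithmeticFunction.Moebius ArithmeticFunction.zeta

namespace MonotoneOn

variable {f : ℝ → ℝ}

theorem integral_le_sum_Icc_one {N : ℕ} (hf : MonotoneOn f (Set.Icc 0 N)) :
    ∫ t in (0 : ℝ)..N, f t ≤ ∑ m ∈ Icc 1 N, f m := by
  have h := MonotoneOn.integral_le_sum_Ico (Nat.zero_le N) (by simpa using hf)
  rwa [Nat.cast_zero, sum_Ico_add' (fun m : ℕ => f m), zero_add, Ico_add_one_right_eq_Icc] at h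

theorem sum_Icc_one_le_integral_add {N : ℕ} (hf : MonotoneOn f (Set.Icc 0 N)) :
    ∑ m ∈ Icc 1 N, f m ≤ (∫ t in (0 : ℝ)..N, f t) + f N - f 0 := by
  have h := MonotoneOn.sum_le_integral_Ico (Nat.zero_le N) (by simpa using hf)
  have hshift : f 0 + ∑ m ∈ Icc 1 N, f m = ∑ m ∈ Ico 0 N, f m + f N := by
    rw [← Ico_add_one_right_eq_Icc, ← sum_Ico_succ_top N.zero_le,
      sum_eq_sum_Ico_succ_bot N.succ_pos, Nat.cast_zero, zero_add, Nat.succ_eq_add_one]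
  rw [Nat.cast_zero] at h
  linarith

theorem abs_sum_Icc_floor_sub_integral_le {x : ℝ} (hx : 0 ≤ x)
    (hf : MonotoneOn f (Set.Icc 0 x)) (hf0 : 0 ≤ f 0) :
    |∑ m ∈ Icc 1 ⌊x⌋₊, f m - ∫ t in (0 : ℝ)..x, f t| ≤ f x := by
  set N := ⌊x⌋₊
  have hNx : (N : ℝ) ≤ x := Nat.floor_le hx
  have hxN : x - N ≤ 1 := by linarith [Nat.lt_floor_add_one x]
  have hmem : ∀ t ∈ Set.Icc (N : ℝ) x, t ∈ Set.Icc 0 x := fun t ht =>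
    ⟨N.cast_nonneg.trans ht.1, ht.2⟩
  have hx_mem : x ∈ Set.Icc 0 x := ⟨hx, le_rfl⟩
  have hfx : 0 ≤ f x := hf0.trans (hf ⟨le_rfl, hx⟩ hx_mem hx)
  have hfN : MonotoneOn f (Set.Icc 0 N) := hf.mono (Set.Icc_subset_Icc_right hNx)
  have htail_int : IntervalIntegrable f MeasureTheory.volume N x :=
    (hf.mono fun t ht => hmem t (Set.uIcc_of_le hNx ▸ ht)).intervalIntegrable
  have hsplit : ∫ t in (0 : ℝ)..x, f t = (∫ t in (0 : ℝ)..N, f t) + ∫ t in (N : ℝ)..x, f t :=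
    (intervalIntegral.integral_add_adjacent_intervals
      (hfN.mono (Set.uIcc_of_le N.cast_nonneg).subset).intervalIntegrable htail_int).symm
  have htail_nonneg : 0 ≤ ∫ t in (N : ℝ)..x, f t :=
    intervalIntegral.integral_nonneg hNx fun t ht =>
      hf0.trans (hf ⟨le_rfl, hx⟩ (hmem t ht) (hmem t ht).1)
  have htail_le : ∫ t in (N : ℝ)..x, f t ≤ f x :=
    calc ∫ t in (N : ℝ)..x, f t ≤ ∫ _ in (N : ℝ)..x, f x :=
          intervalIntegral.integral_mono_on hNx htail_int intervalIntegrable_const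
            fun t ht => hf (hmem t ht) hx_mem ht.2
      _ = (x - N) * f x := by simp
      _ ≤ f x := mul_le_of_le_one_left hfx hxN
  have hfNx : f N ≤ f x := hf ⟨N.cast_nonneg, hNx⟩ hx_mem hNx
  have hlow := hfN.integral_le_sum_Icc_one
  have hupp := hfN.sum_Icc_one_le_integral_add
  rw [abs_le]
  constructor <;> linarith

end MonotoneOn

theorem abs_sum_Icc_floor_rpow_sub_le {s x : ℝ} (hs : 0 ≤ s) (hx : 0 ≤ x) :
    |∑ m ∈ Icc 1 ⌊x⌋₊, (m : ℝ) ^ s - x ^ (s + 1) / (s + 1)| ≤ x ^ s := by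
  have hmono : MonotoneOn (· ^ s) (Set.Icc 0 x) := fun a ha b _ hab => Real.rpow_le_rpow ha.1 hab hs
  have h := hmono.abs_sum_Icc_floor_sub_integral_le hx (Real.rpow_nonneg le_rfl s)
  rwa [integral_rpow (Or.inl (by linarith)), Real.zero_rpow (by linarith), sub_zero] at h

theorem sum_divisors_moebius {R : Type*} [Ring R] (n : ℕ) :
    ∑ d ∈ n.divisors, (μ d : R) = if n = 1 then 1 else 0 := by
  have h := congr($(coe_moebius_mul_coe_zeta (R := R)) n)
  rw [coe_mul_zeta_apply, one_apply] at h
  simpa using h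

theorem Nat.divisors_gcd_eq_filter_dvd (n : ℕ) {a : ℕ} (ha : a ≠ 0) :
    (n.gcd a).divisors = {d ∈ a.divisors | d ∣ n} := by
  ext d
  simp [Nat.dvd_gcd_iff, Nat.gcd_ne_zero_right ha, ha, and_comm]

theorem ite_coprime_eq_sum_moebius {R : Type*} [Ring R] (n : ℕ) {a : ℕ} (ha : a ≠ 0) :
    (if n.Coprime a then 1 else 0 : R) = ∑ d ∈ a.divisors with d ∣ n, (μ d : R) := by
  rw [← Nat.divisors_gcd_eq_filter_dvd n ha, sum_divisors_moebius]

theorem sum_Icc_filter_dvd_eq_sum_Icc_div {M : Type*} [AddCommMonoid M] (f : ℕ → M) (N : ℕ)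
    {d : ℕ} (hd : 0 < d) :
    ∑ n ∈ Icc 1 N with d ∣ n, f n = ∑ m ∈ Icc 1 (N / d), f (d * m) := by
  have himage : (Icc 1 (N / d)).image (d * ·) = {n ∈ Icc 1 N | d ∣ n} := by
    ext n
    simp only [mem_image, mem_Icc, mem_filter]
    constructor
    · rintro ⟨m, ⟨hm1, hmN⟩, rfl⟩
      have := (Nat.le_div_iff_mul_le hd).mp hmN
      exact ⟨⟨Nat.one_le_iff_ne_zero.mpr (by positivity), by lia⟩, dvd_mul_right d m⟩
    · rintro ⟨⟨hn1, hnN⟩, m, rfl⟩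
      exact ⟨m, ⟨Nat.pos_of_mul_pos_left hn1, (Nat.le_div_iff_mul_le hd).mpr (by lia)⟩, rfl⟩
  rw [← himage, sum_image fun m _ m' _ h => Nat.eq_of_mul_eq_mul_left hd h]

theorem sum_Icc_coprime_eq_sum_divisors_moebius {R : Type*} [Ring R] (f : ℕ → R) (N : ℕ)
    {a : ℕ} (ha : a ≠ 0) :
    ∑ n ∈ Icc 1 N with n.Coprime a, f n =
      ∑ d ∈ a.divisors, (μ d : R) * ∑ m ∈ Icc 1 (N / d), f (d * m) := by
  calc ∑ n ∈ Icc 1 N with n.Coprime a, f n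
      = ∑ n ∈ Icc 1 N, ∑ d ∈ a.divisors with d ∣ n, (μ d : R) * f n := by
        rw [sum_filter]
        refine sum_congr rfl fun n _ => ?_
        rw [← sum_mul, ← ite_coprime_eq_sum_moebius n ha, ite_mul, one_mul, zero_mul]
    _ = ∑ d ∈ a.divisors, (μ d : R) * ∑ n ∈ Icc 1 N with d ∣ n, f n := by
        simp_rw [sum_filter, mul_sum, mul_ite, mul_zero]
        exact sum_comm
    _ = _ := sum_congr rfl fun d hd => by
        rw [sum_Icc_filter_dvd_eq_sum_Icc_div f N (Nat.pos_of_mem_divisors hd)]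

theorem sum_divisors_moebius_div_eq_totient_div {K : Type*} [Field K] [CharZero K]
    {a : ℕ} (ha : a ≠ 0) :
    ∑ d ∈ a.divisors, (μ d : K) / d = a.totient / a := by
  have hinv := (sum_eq_iff_sum_mul_moebius_eq (R := K) (f := fun n => (n.totient : K))
    (g := fun n => (n : K))).mp (fun n _ => by exact_mod_cast Nat.sum_totient n) a
    (Nat.pos_of_ne_zero ha)
  rw [Nat.sum_divisorsAntidiagonal (f := fun d e => (μ d : K) * e)] at hinv
  rw [eq_div_iff (Nat.cast_ne_zero.mpr ha), sum_mul, ← hinv]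
  refine sum_congr rfl fun d hd => ?_
  rw [Nat.cast_div (Nat.dvd_of_mem_divisors hd)
    (Nat.cast_ne_zero.mpr (Nat.pos_of_mem_divisors hd).ne')]
  ring

theorem sum_divisors_abs_moebius {R : Type*} [Ring R] [LinearOrder R] [IsStrictOrderedRing R]
    (a : ℕ) :
    ∑ d ∈ a.divisors, |(μ d : R)| = theta a := by
  rw [theta, ← sum_boole]
  refine sum_congr rfl fun d _ => ?_
  rw [← Int.cast_abs, abs_moebius]
  split_ifs <;> simp

theorem abs_sum_Icc_div_rpow_sub_le {s z : ℝ} (hs : 0 ≤ s) (hz : 0 ≤ z) {d : ℕ} (hd : 0 < d) :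
    |∑ m ∈ Icc 1 (⌊z⌋₊ / d), ((d * m : ℕ) : ℝ) ^ s - z ^ (s + 1) / ((s + 1) * d)| ≤ z ^ s := by
  have hd' : (0 : ℝ) < d := Nat.cast_pos.mpr hd
  have hzd : 0 ≤ z / d := by positivity
  have hsum : ∑ m ∈ Icc 1 (⌊z⌋₊ / d), ((d * m : ℕ) : ℝ) ^ s =
      (d : ℝ) ^ s * ∑ m ∈ Icc 1 ⌊z / d⌋₊, (m : ℝ) ^ s := by
    rw [Nat.floor_div_natCast, mul_sum]
    refine sum_congr rfl fun m _ => ?_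
    rw [Nat.cast_mul, Real.mul_rpow hd'.le m.cast_nonneg]
  have hmain : z ^ (s + 1) / ((s + 1) * d) = (d : ℝ) ^ s * ((z / d) ^ (s + 1) / (s + 1)) := by
    rw [Real.div_rpow hz hd'.le, Real.rpow_add hd', Real.rpow_one]
    field_simp
  have hscale : (d : ℝ) ^ s * (z / d) ^ s = z ^ s := by
    rw [← Real.mul_rpow hd'.le hzd, mul_div_cancel₀ _ hd'.ne']
  rw [hsum, hmain, ← mul_sub, abs_mul, abs_of_nonneg (by positivity), ← hscale]
  exact mul_le_mul_of_nonneg_left (abs_sum_Icc_floor_rpow_sub_le hs hzd) (by positivity)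

/-- For a fixed real `s ≥ 0`, uniformly for real `z ≥ 1` and integers `a ≥ 1`,
`∑_{n ≤ z, gcd(n,a)=1} n^s = z^{s+1} φ(a)/((s+1) a) + O(z^s θ(a))`,
with implied constant depending only on `s`. -/
theorem coprime_power_sum_asymptotic (s : ℝ) (hs : 0 ≤ s) :
    ∃ C > 0, ∀ z : ℝ, 1 ≤ z → ∀ a : ℕ, 1 ≤ a →
      |(∑ n ∈ (Finset.Icc 1 ⌊z⌋₊).filter (fun n => Nat.Coprime n a), (n : ℝ) ^ s) -
          z ^ (s + 1) * (Nat.totient a : ℝ) / ((s + 1) * (a : ℝ))| ≤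
        C * z ^ s * (theta a : ℝ) := by
  refine ⟨1, one_pos, fun z hz a ha => ?_⟩
  have ha0 : a ≠ 0 := Nat.one_le_iff_ne_zero.mp ha
  have hz0 : 0 ≤ z := zero_le_one.trans hz
  have hmain : z ^ (s + 1) * a.totient / ((s + 1) * a) =
      ∑ d ∈ a.divisors, (μ d : ℝ) * (z ^ (s + 1) / ((s + 1) * d)) := by
    rw [← div_mul_div_comm, ← sum_divisors_moebius_div_eq_totient_div ha0, mul_sum]
    exact sum_congr rfl fun d _ => by rw [div_mul_div_comm, mul_comm (z ^ _), mul_div_assoc]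
  rw [sum_Icc_coprime_eq_sum_divisors_moebius _ _ ha0, hmain, ← sum_sub_distrib]
  calc _ ≤ ∑ d ∈ a.divisors, |(μ d : ℝ)| * z ^ s := by
        refine (abs_sum_le_sum_abs _ _).trans (sum_le_sum fun d hd => ?_)
        rw [← mul_sub, abs_mul]
        exact mul_le_mul_of_nonneg_left
          (abs_sum_Icc_div_rpow_sub_le hs hz0 (Nat.pos_of_mem_divisors hd)) (abs_nonneg _)
    _ = 1 * z ^ s * theta a := by rw [← sum_mul, sum_divisors_abs_moebius]; ring
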